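/- arXiv:2311.01351 — 3 statements merged into one kernel-verified Lean document; each statement's English description precedes it below -/
import Mathlib

section
/- Truth Lemma for the canonical pseudo-model: for every formula φ of L_D and every maximal SC-consistent set Γ (viewed as a world of the canonical pseudo-model Mc), φ ∈ Γ if and only if Mc,Γ ⊨ φ. -/
attribute [local instance] Classical.propDecidable

noncomputable section

/-- Formulas of the epistemic language `L_D` with distributed knowledge `D_B`
for nonempty groups `B` of agents. -/
inductive Form (A AP : Type) : Type
  | atom : AP → Form A AP
  | neg  : Form A AP → Form A AP
  | and  : Form A AP → Form A AP → Form A AP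
  | dk   : (B : Finset A) → B.Nonempty → Form A AP → Form A AP

namespace Form

variable {A AP : Type}

/-- Disjunction, `φ ∨ ψ := ¬(¬φ ∧ ¬ψ)`. -/
def or (φ ψ : Form A AP) : Form A AP := neg ((neg φ).and (neg ψ))

/-- Implication, `φ ⇒ ψ := ¬φ ∨ ψ`. -/
def imp (φ ψ : Form A AP) : Form A AP := (neg φ).or ψ

/-- `⊤ := p ∨ ¬p`. -/
def verum [Nonempty AP] : Form A AP :=
  (atom (Classical.arbitrary AP)).or (neg (atom (Classical.arbitrary AP)))

/-- `⊥ := ¬⊤`. -/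
def falsum [Nonempty AP] : Form A AP := neg verum

/-- Individual knowledge `K_a φ := D_{{a}} φ`. -/
def K (a : A) (φ : Form A AP) : Form A AP := dk {a} (Finset.singleton_nonempty a) φ

/-- `dead_a := K_a ⊥`. -/
def deadAgent [Nonempty AP] (a : A) : Form A AP := K a falsum

/-- `alive_a := ¬dead_a`. -/
def aliveAgent [Nonempty AP] (a : A) : Form A AP := (deadAgent a).neg

/-- `alive_B := ¬ D_B ⊥`. -/
def aliveGrp [Nonempty AP] (B : Finset A) (hB : B.Nonempty) : Form A AP := (dk B hB falsum).neg

/-- Finite conjunction. -/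
def bigAnd [Nonempty AP] : List (Form A AP) → Form A AP
  | [] => verum
  | φ :: t => φ.and (bigAnd t)

/-- Finite disjunction. -/
def bigOr [Nonempty AP] : List (Form A AP) → Form A AP
  | [] => falsum
  | φ :: t => φ.or (bigOr t)

/-- `dead_C := ⋀_{a ∈ C} dead_a`. -/
def deadGrp [Nonempty AP] (C : Finset A) : Form A AP := bigAnd (C.toList.map deadAgent)

end Form

/-- A propositional tautology: true under every assignment that interprets `¬` and `∧`
classically (atoms and `D_B`-formulas are treated as opaque). -/
def IsTaut {A AP : Type} (φ : Form A AP) : Prop :=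
  ∀ v : Form A AP → Prop,
    (∀ ψ : Form A AP, v ψ.neg ↔ ¬ v ψ) →
    (∀ ψ χ : Form A AP, v (ψ.and χ) ↔ (v ψ ∧ v χ)) →
    v φ

theorem unionNE {α : Type} [DecidableEq α] {s t : Finset α} (h : s.Nonempty) :
    (s ∪ t).Nonempty :=
  ⟨h.choose, Finset.mem_union_left _ h.choose_spec⟩

section ProofSystem

variable {A AP : Type} [Fintype A] [Nonempty AP]

/-- The proof system `SC` (axioms `K`, `B`, `4`, `Mono`, `Union`, `NE`, `P`, all
propositional tautologies, modus ponens and necessitation), extended by an arbitrary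
additional set `Ax` of axioms. -/
inductive Prf (Ax : Form A AP → Prop) : Form A AP → Prop
  | taut {φ : Form A AP} : IsTaut φ → Prf Ax φ
  | mp {φ ψ : Form A AP} : Prf Ax (φ.imp ψ) → Prf Ax φ → Prf Ax ψ
  | nec {φ : Form A AP} (B : Finset A) (hB : B.Nonempty) :
      Prf Ax φ → Prf Ax (Form.dk B hB φ)
  | axK {φ ψ : Form A AP} (B : Finset A) (hB : B.Nonempty) :
      Prf Ax ((Form.dk B hB (φ.imp ψ)).imp ((Form.dk B hB φ).imp (Form.dk B hB ψ)))
  | axB {φ : Form A AP} (B : Finset A) (hB : B.Nonempty) :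
      Prf Ax (φ.imp (Form.dk B hB (Form.neg (Form.dk B hB φ.neg))))
  | ax4 {φ : Form A AP} (B : Finset A) (hB : B.Nonempty) :
      Prf Ax ((Form.dk B hB φ).imp (Form.dk B hB (Form.dk B hB φ)))
  | axMono {φ : Form A AP} (B B' : Finset A) (hB : B.Nonempty) (hB' : B'.Nonempty)
      (hsub : B ⊆ B') : Prf Ax ((Form.dk B hB φ).imp (Form.dk B' hB' φ))
  | axUnion (B B' : Finset A) (hB : B.Nonempty) (hB' : B'.Nonempty) :
      Prf Ax (((Form.aliveGrp B hB).and (Form.aliveGrp B' hB')).imp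
        (Form.aliveGrp (B ∪ B') (unionNE hB)))
  | axNE : Prf Ax (Form.bigOr ((Finset.univ : Finset A).toList.map Form.aliveAgent))
  | axP {φ : Form A AP} (B : Finset A) (hB : B.Nonempty) :
      Prf Ax ((((Form.aliveGrp B hB).and (Form.deadGrp Bᶜ)).and φ).imp
        (Form.dk B hB ((Form.deadGrp Bᶜ).imp φ)))
  | extra {φ : Form A AP} : Ax φ → Prf Ax φ

/-- Provability in `SC` itself (no extra axioms). -/
def SC : Form A AP → Prop := Prf (fun _ => False)

/-- Instances of Axiom `Min : alive_B ∧ dead_{A∖B} ⇒ D_B dead_{A∖B}` for `B ⊊ A`. -/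
def MinAx : Form A AP → Prop := fun φ =>
  ∃ (B : Finset A) (hB : B.Nonempty), B ≠ Finset.univ ∧
    φ = ((Form.aliveGrp B hB).and (Form.deadGrp Bᶜ)).imp (Form.dk B hB (Form.deadGrp Bᶜ))

/-- Instances of Axiom `Max : alive_B ⇒ ¬ D_B ¬ dead_{A∖B}` for `B ⊊ A`. -/
def MaxAx : Form A AP → Prop := fun φ =>
  ∃ (B : Finset A) (hB : B.Nonempty), B ≠ Finset.univ ∧
    φ = (Form.aliveGrp B hB).imp (Form.neg (Form.dk B hB (Form.neg (Form.deadGrp Bᶜ))))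

/-- Provability in `SCmin = SC + Min`. -/
def SCmin : Form A AP → Prop := Prf MinAx

/-- Provability in `SCmax = SC + Max`. -/
def SCmax : Form A AP → Prop := Prf MaxAx

/-- `Γ ⊢_P φ` : some finite conjunction of members of `Γ` provably implies `φ`. -/
def ProvesFrom (P : Form A AP → Prop) (Γ : Set (Form A AP)) (φ : Form A AP) : Prop :=
  ∃ L : List (Form A AP), (∀ γ ∈ L, γ ∈ Γ) ∧ P ((Form.bigAnd L).imp φ)

/-- Consistency of a set of formulas with respect to a provability predicate `P`. -/
def ConsistentSet (P : Form A AP → Prop) (Γ : Set (Form A AP)) : Prop :=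
  ¬ ProvesFrom P Γ Form.falsum

/-- Maximal consistent sets of formulas. -/
def MaxConsistent (P : Form A AP → Prop) (Γ : Set (Form A AP)) : Prop :=
  ConsistentSet P Γ ∧ ∀ φ ∉ Γ, ¬ ConsistentSet P (insert φ Γ)

end ProofSystem

/-! ### Simplicial models -/

/-- The data of a (generalized) simplicial model: a set `S` of simplexes over the vertex
type `V`, a colouring `chi`, a set of worlds `Wld` and a labelling of worlds. -/
structure SimpData (A AP V : Type) where
  S : Set (Finset V)
  chi : V → A
  Wld : Set (Finset V)
  label : Finset V → Set AP

namespace SimpData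

variable {A AP V : Type}

/-- A facet: a simplex maximal under inclusion. -/
def IsFacet (C : SimpData A AP V) (X : Finset V) : Prop :=
  X ∈ C.S ∧ ∀ Y ∈ C.S, X ⊆ Y → X = Y

/-- `⟨V,S,chi⟩` is a chromatic simplicial complex: simplexes are nonempty, every
singleton is a simplex, `S` is downward closed, and every simplex has pairwise
distinct colours. -/
def IsComplex (C : SimpData A AP V) : Prop :=
  (∀ X ∈ C.S, X.Nonempty) ∧
  (∀ v : V, ({v} : Finset V) ∈ C.S) ∧
  (∀ X ∈ C.S, ∀ Y : Finset V, Y ⊆ X → Y.Nonempty → Y ∈ C.S) ∧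
  (∀ X ∈ C.S, ∀ v ∈ X, ∀ w ∈ X, C.chi v = C.chi w → v = w)

/-- `C` is a generalized simplicial model: a chromatic simplicial complex together
with a set of worlds `Wld` with `Facets(C) ⊆ Wld ⊆ S`. -/
def IsModel (C : SimpData A AP V) : Prop :=
  C.IsComplex ∧ (∀ X, C.IsFacet X → X ∈ C.Wld) ∧ C.Wld ⊆ C.S

/-- The model is minimal: the worlds are exactly the facets. -/
def Minimal (C : SimpData A AP V) : Prop := ∀ X, X ∈ C.Wld ↔ C.IsFacet X

/-- The model is maximal: every simplex is a world. -/
def Maximal (C : SimpData A AP V) : Prop := C.Wld = C.S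

end SimpData

/-- Satisfaction on simplicial models: `C,w ⊨ D_B φ` iff `φ` holds at every world `w'`
with `B ⊆ chi(w ∩ w')`. -/
def SimpData.sat {A AP V : Type} (C : SimpData A AP V) : Finset V → Form A AP → Prop
  | w, .atom p => p ∈ C.label w
  | w, .neg φ => ¬ C.sat w φ
  | w, .and φ ψ => C.sat w φ ∧ C.sat w ψ
  | w, .dk B _ φ => ∀ w' ∈ C.Wld, (↑B : Set A) ⊆ C.chi '' ((↑w : Set V) ∩ ↑w') → C.sat w' φ

/-! ### Partial epistemic models -/

/-- The data of a partial epistemic model: an accessibility relation for each agent and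
a labelling of worlds. -/
structure PEData (A AP W : Type) where
  rel : A → W → W → Prop
  label : W → Set AP

namespace PEData

variable {A AP W : Type}

/-- Each relation is a partial equivalence relation (symmetric and transitive). -/
def IsPE (M : PEData A AP W) : Prop := ∀ a : A, Symmetric (M.rel a) ∧ Transitive (M.rel a)

/-- The set of agents alive in a world. -/
def live (M : PEData A AP W) (w : W) : Set A := {a | M.rel a w w}

/-- Every world has at least one alive agent. -/
def NoEmptyWorld (M : PEData A AP W) : Prop := ∀ w : W, (M.live w).Nonempty

/-- Distinct worlds with the same alive agents are distinguished by some alive agent. -/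
def Proper (M : PEData A AP W) : Prop :=
  ∀ w w' : W, w ≠ w' → M.live w = M.live w' → ∃ a ∈ M.live w, ¬ M.rel a w w'

/-- The model has no sub-world. -/
def Minimal (M : PEData A AP W) : Prop :=
  ∀ w w' : W, M.live w ⊂ M.live w' → ∃ a ∈ M.live w, ¬ M.rel a w w'

/-- The model has all sub-worlds. -/
def Maximal (M : PEData A AP W) : Prop :=
  ∀ w' : W, ∀ B : Set A, B.Nonempty → B ⊂ M.live w' →
    ∃ w : W, M.live w = B ∧ ∀ a ∈ B, M.rel a w w'

end PEData

/-- Satisfaction on partial epistemic models: `M,w ⊨ D_B φ` iff `φ` holds at every `w'`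
with `w ∼_a w'` for all `a ∈ B`. -/
def PEData.sat {A AP W : Type} (M : PEData A AP W) : W → Form A AP → Prop
  | w, .atom p => p ∈ M.label w
  | w, .neg φ => ¬ M.sat w φ
  | w, .and φ ψ => M.sat w φ ∧ M.sat w ψ
  | w, .dk B _ φ => ∀ w' : W, (∀ a ∈ B, M.rel a w w') → M.sat w' φ

/-- The partial epistemic model `κ(C)` associated with a simplicial model `C`:
same worlds, `w ∼_a w'` iff `a ∈ chi(w ∩ w')`, same labelling. -/
def kappa {A AP V : Type} (C : SimpData A AP V) : PEData A AP {w : Finset V // w ∈ C.Wld} where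
  rel := fun a w w' => a ∈ C.chi '' ((↑w.1 : Set V) ∩ ↑w'.1)
  label := fun w => C.label w.1

/-- Vertices of `σ(M)`: pairs `v^w_a = (a, [w]_a)` with `a` alive in `w`. -/
def sigmaVert {A AP W : Type} (M : PEData A AP W) : Type :=
  {v : A × Set W // ∃ w : W, M.rel v.1 w w ∧ v.2 = {w' | M.rel v.1 w w'}}

/-- The world `X_w = { v^w_a | a ∈ live(w) }` of `σ(M)`. -/
def sigmaWorld {A AP W : Type} [Fintype A] (M : PEData A AP W) (w : W) :
    Finset (sigmaVert M) :=
  ((Finset.univ : Finset A).filter (fun a => M.rel a w w)).attach.image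
    (fun a => ⟨(a.1, {w' | M.rel a.1 w w'}),
      ⟨w, by exact (Finset.mem_filter.mp a.2).2, rfl⟩⟩)

/-- The simplicial model `σ(M)` associated with a partial epistemic model `M`:
simplexes are the nonempty subsets of the sets `X_w`, worlds are the `X_w`,
colouring is the first projection, and `ℓ(X_w) = L(w)`. -/
def sigmaModel {A AP W : Type} [Fintype A] (M : PEData A AP W) :
    SimpData A AP (sigmaVert M) where
  S := {X | X.Nonempty ∧ ∃ w : W, X ⊆ sigmaWorld M w}
  chi := fun v => v.1.1
  Wld := {X | ∃ w : W, X = sigmaWorld M w}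
  label := fun X => {p | ∃ w : W, X = sigmaWorld M w ∧ p ∈ M.label w}

/-! ### Pseudo-models, the canonical model and unravelling -/

/-- The data of a pseudo-model: a relation `∼_B` for every group `B ⊆ A`. -/
structure PseudoData (A AP W : Type) where
  rel : Finset A → W → W → Prop
  label : W → Set AP

/-- `M` is a pseudo-model: each `∼_B` is symmetric and transitive, the relations are
antitone (`∼_{B'} ⊆ ∼_B` for `B ⊆ B'`), and `w ∼_B w` together with `w ∼_{B'} w`
implies `w ∼_{B ∪ B'} w`. -/
def PseudoData.IsPseudo {A AP W : Type} [DecidableEq A] (M : PseudoData A AP W) : Prop :=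
  (∀ B : Finset A, Symmetric (M.rel B)) ∧
  (∀ B : Finset A, Transitive (M.rel B)) ∧
  (∀ B B' : Finset A, B ⊆ B' → ∀ w w' : W, M.rel B' w w' → M.rel B w w') ∧
  (∀ (w : W) (B B' : Finset A), M.rel B w w → M.rel B' w w → M.rel (B ∪ B') w w)

/-- Satisfaction on pseudo-models: `D_B φ` quantifies over `∼_B`-successors. -/
def PseudoData.sat {A AP W : Type} (M : PseudoData A AP W) : W → Form A AP → Prop
  | w, .atom p => p ∈ M.label w
  | w, .neg φ => ¬ M.sat w φ
  | w, .and φ ψ => M.sat w φ ∧ M.sat w ψ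
  | w, .dk B _ φ => ∀ w' : W, M.rel B w w' → M.sat w' φ

/-- The canonical pseudo-model of a proof system `P`: worlds are the maximal
`P`-consistent sets, `Γ ∼_B Δ` iff every `φ` with `D_B φ ∈ Γ` satisfies `φ ∈ Δ`,
and `L(Γ) = Γ ∩ AP`. -/
def canonicalPsm (A AP : Type) [Fintype A] [Nonempty AP] (P : Form A AP → Prop) :
    PseudoData A AP {Γ : Set (Form A AP) // MaxConsistent P Γ} where
  rel := fun B Γ Δ => ∀ (hB : B.Nonempty) (φ : Form A AP), Form.dk B hB φ ∈ Γ.1 → φ ∈ Δ.1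
  label := fun Γ => {p | Form.atom p ∈ Γ.1}

/-- `IsHist M w l` : the sequence starting at `w` with steps `l` is a history of `M`. -/
def IsHist {A AP W : Type} (M : PseudoData A AP W) : W → List (Finset A × W) → Prop
  | _, [] => True
  | w, (B, w') :: t => M.rel B w w' ∧ IsHist M w' t

/-- A history `(w₀, B₁, w₁, …, B_k, w_k)` of a pseudo-model `M`. -/
structure Hist {A AP W : Type} (M : PseudoData A AP W) where
  first : W
  steps : List (Finset A × W)
  valid : IsHist M first steps

/-- The last world of a history. -/
def Hist.last {A AP W : Type} {M : PseudoData A AP W} (h : Hist M) : W :=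
  (h.steps.map Prod.snd).getLastD h.first

/-- `h →_a h'` : `h'` extends `h` by one step `(B, w)` with `a ∈ B`. -/
def histStep {A AP W : Type} (M : PseudoData A AP W) (a : A) (h h' : Hist M) : Prop :=
  ∃ (B : Finset A) (w : W), a ∈ B ∧ h'.first = h.first ∧ h'.steps = h.steps ++ [(B, w)]

/-- `∼^U_a` : the symmetric-transitive closure of `→_a`. -/
def histRel {A AP W : Type} (M : PseudoData A AP W) (a : A) : Hist M → Hist M → Prop :=
  Relation.TransGen (fun h h' => histStep M a h h' ∨ histStep M a h' h)

/-- The unravelling `U(M)` of a pseudo-model `M`: worlds are histories, relations are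
the `∼^U_a`, and `L^U(h) = L(last h)`. -/
def unravel {A AP W : Type} (M : PseudoData A AP W) : PEData A AP (Hist M) where
  rel := histRel M
  label := fun h => M.label h.last

/-- World-equivalence `w ≡ w'` : same alive agents and related by every alive agent. -/
def pequiv {A AP W : Type} (M : PEData A AP W) (w w' : W) : Prop :=
  M.live w = M.live w' ∧ ∀ a ∈ M.live w, M.rel a w w'

/-- The quotient of a partial epistemic model by world-equivalence. -/
def properify {A AP W : Type} (M : PEData A AP W) : PEData A AP (Quot (pequiv M)) where
  rel := fun a x y => ∃ w w' : W, x = Quot.mk _ w ∧ y = Quot.mk _ w' ∧ M.rel a w w'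
  label := fun x => {p | ∃ w : W, x = Quot.mk _ w ∧ p ∈ M.label w}

/-! ### Local simplicial models, morphisms and the guarded positive fragment -/

/-- The data of a local simplicial model: atomic propositions label the vertices. -/
structure LocalSimpData (A AP V : Type) where
  S : Set (Finset V)
  chi : V → A
  Wld : Set (Finset V)
  vlabel : V → Set AP

namespace LocalSimpData

variable {A AP V : Type}

/-- A facet: a simplex maximal under inclusion. -/
def IsFacet (C : LocalSimpData A AP V) (X : Finset V) : Prop :=
  X ∈ C.S ∧ ∀ Y ∈ C.S, X ⊆ Y → X = Y

/-- `C` is a local simplicial model with respect to the ownership map `owner : AP → A`: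
a chromatic simplicial complex with `Facets ⊆ Wld ⊆ S`, where each vertex is labelled
with atomic propositions belonging to its colour. -/
def IsModel (C : LocalSimpData A AP V) (owner : AP → A) : Prop :=
  (∀ X ∈ C.S, X.Nonempty) ∧
  (∀ v : V, ({v} : Finset V) ∈ C.S) ∧
  (∀ X ∈ C.S, ∀ Y : Finset V, Y ⊆ X → Y.Nonempty → Y ∈ C.S) ∧
  (∀ X ∈ C.S, ∀ v ∈ X, ∀ w ∈ X, C.chi v = C.chi w → v = w) ∧
  (∀ X, C.IsFacet X → X ∈ C.Wld) ∧ C.Wld ⊆ C.S ∧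
  (∀ v : V, ∀ p ∈ C.vlabel v, owner p = C.chi v)

/-- The labelling of a world: the union of the labellings of its vertices. -/
def wlabel (C : LocalSimpData A AP V) (X : Finset V) : Set AP :=
  ⋃ v ∈ X, C.vlabel v

end LocalSimpData

/-- Purely propositional formulas. -/
inductive PForm (AP : Type) : Type
  | atom : AP → PForm AP
  | neg : PForm AP → PForm AP
  | and : PForm AP → PForm AP → PForm AP

/-- The atomic propositions occurring in a propositional formula. -/
def PForm.atoms {AP : Type} : PForm AP → Set AP
  | .atom p => {p}
  | .neg ψ => ψ.atoms
  | .and ψ χ => ψ.atoms ∪ χ.atoms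

/-- Satisfaction of propositional formulas at a world of a local simplicial model. -/
def PForm.psat {A AP V : Type} (C : LocalSimpData A AP V) (w : Finset V) : PForm AP → Prop
  | .atom p => p ∈ C.wlabel w
  | .neg ψ => ¬ PForm.psat C w ψ
  | .and ψ χ => PForm.psat C w ψ ∧ PForm.psat C w χ

/-- The guarded positive epistemic fragment:
`φ ::= (alive_B ⇒ ψ_B) | φ∧φ | φ∨φ | D_U φ | C_U φ`. -/
inductive GForm (A AP : Type) : Type
  | guard : Finset A → PForm AP → GForm A AP
  | and : GForm A AP → GForm A AP → GForm A AP
  | or : GForm A AP → GForm A AP → GForm A AP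
  | dk : Finset A → GForm A AP → GForm A AP
  | ck : Finset A → GForm A AP → GForm A AP

/-- Well-formedness of guarded formulas: in a guard `alive_B ⇒ ψ_B`, all atomic
propositions of `ψ_B` belong to agents of `B`. -/
def GForm.WF {A AP : Type} (owner : AP → A) : GForm A AP → Prop
  | .guard B ψ => ∀ p ∈ ψ.atoms, owner p ∈ B
  | .and φ₁ φ₂ => φ₁.WF owner ∧ φ₂.WF owner
  | .or φ₁ φ₂ => φ₁.WF owner ∧ φ₂.WF owner
  | .dk _ φ => φ.WF owner
  | .ck _ φ => φ.WF owner

/-- Reachability through a sequence of worlds, consecutive ones sharing a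
`U`-coloured simplex. -/
def creach {A AP V : Type} (C : LocalSimpData A AP V) (U : Finset A) :
    Finset V → Finset V → Prop :=
  Relation.ReflTransGen
    (fun X Y => Y ∈ C.Wld ∧ (↑U : Set A) ⊆ C.chi '' ((↑X : Set V) ∩ ↑Y))

/-- Satisfaction of guarded positive formulas on local simplicial models. -/
def GForm.gsat {A AP V : Type} (C : LocalSimpData A AP V) :
    Finset V → GForm A AP → Prop
  | w, .guard B ψ => ((↑B : Set A) ⊆ C.chi '' (↑w : Set V)) → ψ.psat C w
  | w, .and φ₁ φ₂ => φ₁.gsat C w ∧ φ₂.gsat C w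
  | w, .or φ₁ φ₂ => φ₁.gsat C w ∨ φ₂.gsat C w
  | w, .dk U φ => ∀ w' ∈ C.Wld, (↑U : Set A) ⊆ C.chi '' ((↑w : Set V) ∩ ↑w') → φ.gsat C w'
  | w, .ck U φ => ∀ w' ∈ C.Wld, creach C U w w' → φ.gsat C w'

/-- Image of a simplex under a vertex map. -/
def fimage {V V' : Type} (f : V → V') (X : Finset V) : Finset V' :=
  X.image f

/-- Morphisms of local simplicial models: map simplexes to simplexes and worlds to
worlds, preserving colours and vertex labellings. -/
def IsMorphism {A AP V V' : Type} (C : LocalSimpData A AP V) (D : LocalSimpData A AP V')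
    (f : V → V') : Prop :=
  (∀ X ∈ C.S, fimage f X ∈ D.S) ∧
  (∀ X ∈ C.Wld, fimage f X ∈ D.Wld) ∧
  (∀ v : V, D.chi (f v) = C.chi v) ∧
  (∀ v : V, D.vlabel (f v) = C.vlabel v)

end

/-
Induction on the formula. The Boolean cases are the closure properties of maximal
consistent sets. For `D_B ψ ∉ Γ`, the set `{χ | D_B χ ∈ Γ} ∪ {¬ψ}` is consistent, since
otherwise necessitation and `K` would derive `D_B ψ` from `Γ`; a Lindenbaum extension of it
is a `∼_B`-successor of `Γ` in which `ψ` fails.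
-/

namespace Form

variable {A AP : Type} {v : Form A AP → Prop}

theorem valuation_imp (hneg : ∀ ψ : Form A AP, v ψ.neg ↔ ¬ v ψ)
    (hand : ∀ ψ χ : Form A AP, v (ψ.and χ) ↔ v ψ ∧ v χ) (φ ψ : Form A AP) :
    v (φ.imp ψ) ↔ (v φ → v ψ) := by
  simp only [imp, or, hneg, hand]
  tauto

theorem valuation_verum [Nonempty AP] (hneg : ∀ ψ : Form A AP, v ψ.neg ↔ ¬ v ψ)
    (hand : ∀ ψ χ : Form A AP, v (ψ.and χ) ↔ v ψ ∧ v χ) : v (verum : Form A AP) := by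
  simp only [verum, or, hneg, hand]
  tauto

theorem valuation_falsum [Nonempty AP] (hneg : ∀ ψ : Form A AP, v ψ.neg ↔ ¬ v ψ)
    (hand : ∀ ψ χ : Form A AP, v (ψ.and χ) ↔ v ψ ∧ v χ) : ¬ v (falsum : Form A AP) := by
  simpa only [falsum, hneg, not_not] using valuation_verum hneg hand

end Form

open Form

section Derivations

variable {A AP : Type} [Fintype A] [Nonempty AP] {Ax : Form A AP → Prop}

namespace Prf

theorem mp_taut {φ ψ : Form A AP} (ht : IsTaut (φ.imp ψ)) (h : Prf Ax φ) : Prf Ax ψ :=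
  mp (taut ht) h

theorem mp_taut₂ {φ ψ χ : Form A AP} (ht : IsTaut (φ.imp (ψ.imp χ))) (h : Prf Ax φ)
    (h' : Prf Ax ψ) : Prf Ax χ :=
  mp (mp (taut ht) h) h'

theorem imp_of {φ ψ : Form A AP} (h : Prf Ax ψ) : Prf Ax (φ.imp ψ) :=
  mp_taut (fun _ hneg hand => by simp only [valuation_imp hneg hand]; tauto) h

theorem imp_trans {φ ψ χ : Form A AP} (h : Prf Ax (φ.imp ψ)) (h' : Prf Ax (ψ.imp χ)) :
    Prf Ax (φ.imp χ) :=
  mp_taut₂ (fun _ hneg hand => by simp only [valuation_imp hneg hand]; tauto) h h'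

theorem bigAnd_imp_of_mem {γ : Form A AP} : ∀ {L : List (Form A AP)}, γ ∈ L →
    Prf Ax ((bigAnd L).imp γ)
  | δ :: L, hγ => by
    rcases List.mem_cons.mp hγ with rfl | hγ
    · exact taut fun _ hneg hand => by simp only [bigAnd, valuation_imp hneg hand, hand]; tauto
    · exact imp_trans (taut fun _ hneg hand => by
        simp only [bigAnd, valuation_imp hneg hand, hand]; tauto) (bigAnd_imp_of_mem hγ)

theorem imp_bigAnd {φ : Form A AP} : ∀ {L : List (Form A AP)},
    (∀ γ ∈ L, Prf Ax (φ.imp γ)) → Prf Ax (φ.imp (bigAnd L))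
  | [], _ => imp_of (taut fun _ => valuation_verum)
  | γ :: L, h => mp_taut₂
      (fun _ hneg hand => by simp only [bigAnd, valuation_imp hneg hand, hand]; tauto)
      (h γ List.mem_cons_self) (imp_bigAnd fun δ hδ => h δ (List.mem_cons_of_mem γ hδ))

theorem bigAnd_imp_bigAnd {L L' : List (Form A AP)} (h : ∀ γ ∈ L, γ ∈ L') :
    Prf Ax ((bigAnd L').imp (bigAnd L)) :=
  imp_bigAnd fun γ hγ => bigAnd_imp_of_mem (h γ hγ)

theorem dk_imp_dk {B : Finset A} {hB : B.Nonempty} {φ ψ : Form A AP} (h : Prf Ax (φ.imp ψ)) :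
    Prf Ax ((dk B hB φ).imp (dk B hB ψ)) :=
  mp (axK B hB) (nec B hB h)

theorem bigAnd_map_dk_imp_dk_bigAnd (B : Finset A) (hB : B.Nonempty) :
    ∀ L : List (Form A AP), Prf Ax ((bigAnd (L.map (dk B hB))).imp (dk B hB (bigAnd L)))
  | [] => imp_of (nec B hB (taut fun _ => valuation_verum))
  | γ :: L => by
    have hγ : Prf Ax ((dk B hB γ).imp (dk B hB ((bigAnd L).imp (γ.and (bigAnd L))))) :=
      dk_imp_dk (taut fun _ hneg hand => by simp only [valuation_imp hneg hand, hand]; tauto)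
    exact mp_taut₂ (fun _ hneg hand => by
        simp only [List.map_cons, bigAnd, valuation_imp hneg hand, hand]; tauto)
      (imp_trans hγ (axK B hB)) (bigAnd_map_dk_imp_dk_bigAnd B hB L)

end Prf

namespace ProvesFrom

variable {Γ : Set (Form A AP)} {φ ψ : Form A AP}

theorem of_prf (h : Prf Ax φ) : ProvesFrom (Prf Ax) Γ φ :=
  ⟨[], by simp, Prf.imp_of h⟩

theorem of_mem (h : φ ∈ Γ) : ProvesFrom (Prf Ax) Γ φ :=
  ⟨[φ], by simpa using h, Prf.bigAnd_imp_of_mem List.mem_cons_self⟩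

theorem mp (h : ProvesFrom (Prf Ax) Γ (φ.imp ψ)) (h' : ProvesFrom (Prf Ax) Γ φ) :
    ProvesFrom (Prf Ax) Γ ψ := by
  obtain ⟨L, hL, hprf⟩ := h
  obtain ⟨L', hL', hprf'⟩ := h'
  refine ⟨L ++ L', fun γ hγ => (List.mem_append.mp hγ).elim (hL γ) (hL' γ), ?_⟩
  exact Prf.mp_taut₂ (fun _ hneg hand => by simp only [valuation_imp hneg hand]; tauto)
    (Prf.imp_trans (Prf.bigAnd_imp_bigAnd fun γ => List.mem_append_left L') hprf)
    (Prf.imp_trans (Prf.bigAnd_imp_bigAnd fun γ => List.mem_append_right L) hprf')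

theorem mp_taut (ht : IsTaut (φ.imp ψ)) (h : ProvesFrom (Prf Ax) Γ φ) :
    ProvesFrom (Prf Ax) Γ ψ :=
  mp (of_prf (Prf.taut ht)) h

theorem deduction (h : ProvesFrom (Prf Ax) (insert φ Γ) ψ) :
    ProvesFrom (Prf Ax) Γ (φ.imp ψ) := by
  obtain ⟨L, hL, hprf⟩ := h
  refine ⟨L.filter (· ≠ φ), fun γ hγ => ?_, ?_⟩
  · obtain ⟨hγL, hγφ⟩ := List.mem_filter.mp hγ
    exact (hL γ hγL).resolve_left (by simpa using hγφ)
  · have hsplit : Prf Ax ((bigAnd (φ :: L.filter (· ≠ φ))).imp (bigAnd L)) :=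
      Prf.bigAnd_imp_bigAnd fun γ hγ => by
        by_cases hγφ : γ = φ
        · exact hγφ ▸ List.mem_cons_self
        · exact List.mem_cons_of_mem φ (List.mem_filter.mpr ⟨hγ, by simpa using hγφ⟩)
    exact Prf.mp_taut (fun _ hneg hand => by
      simp only [bigAnd, valuation_imp hneg hand, hand]; tauto) (Prf.imp_trans hsplit hprf)

theorem of_insert_neg_proves_falsum (h : ProvesFrom (Prf Ax) (insert φ.neg Γ) falsum) :
    ProvesFrom (Prf Ax) Γ φ :=
  mp_taut (fun _ hneg hand => by
    simp only [valuation_imp hneg hand, hneg]; have := valuation_falsum hneg hand; tauto)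
    (deduction h)

theorem dk_of_boxed {B : Finset A} {hB : B.Nonempty}
    (h : ProvesFrom (Prf Ax) {χ | dk B hB χ ∈ Γ} φ) : ProvesFrom (Prf Ax) Γ (dk B hB φ) := by
  obtain ⟨L, hL, hprf⟩ := h
  refine ⟨L.map (dk B hB), fun γ hγ => ?_, ?_⟩
  · obtain ⟨χ, hχ, rfl⟩ := List.mem_map.mp hγ
    exact hL χ hχ
  · exact Prf.imp_trans (Prf.bigAnd_map_dk_imp_dk_bigAnd B hB L) (Prf.dk_imp_dk hprf)

end ProvesFrom

namespace MaxConsistent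

variable {Γ : Set (Form A AP)}

theorem mem_of_provesFrom (hΓ : MaxConsistent (Prf Ax) Γ) {φ : Form A AP} (h : ProvesFrom (Prf Ax) Γ φ) : φ ∈ Γ := by
  by_contra hφ
  exact hΓ.1 (ProvesFrom.mp (ProvesFrom.deduction (not_not.mp (hΓ.2 φ hφ))) h)

theorem neg_mem_iff (hΓ : MaxConsistent (Prf Ax) Γ) (φ : Form A AP) : φ.neg ∈ Γ ↔ φ ∉ Γ := by
  refine ⟨fun hn hφ => hΓ.1 ?_, fun hφ => hΓ.mem_of_provesFrom ?_⟩
  · refine ProvesFrom.mp (ProvesFrom.mp_taut ?_ (ProvesFrom.of_mem hn)) (ProvesFrom.of_mem hφ)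
    intro _ hneg hand
    simp only [valuation_imp hneg hand, hneg]
    have := valuation_falsum hneg hand
    tauto
  · refine ProvesFrom.mp_taut ?_ (ProvesFrom.deduction (not_not.mp (hΓ.2 φ hφ)))
    intro _ hneg hand
    simp only [valuation_imp hneg hand, hneg]
    have := valuation_falsum hneg hand
    tauto

theorem and_mem_iff (hΓ : MaxConsistent (Prf Ax) Γ) (φ ψ : Form A AP) : φ.and ψ ∈ Γ ↔ φ ∈ Γ ∧ ψ ∈ Γ := by
  refine ⟨fun h => ⟨hΓ.mem_of_provesFrom ?_, hΓ.mem_of_provesFrom ?_⟩,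
    fun ⟨hφ, hψ⟩ => hΓ.mem_of_provesFrom ?_⟩
  · exact ProvesFrom.mp_taut (fun _ hneg hand => by
      simp only [valuation_imp hneg hand, hand]; tauto) (ProvesFrom.of_mem h)
  · exact ProvesFrom.mp_taut (fun _ hneg hand => by
      simp only [valuation_imp hneg hand, hand]; tauto) (ProvesFrom.of_mem h)
  · exact ProvesFrom.mp (ProvesFrom.mp_taut (fun _ hneg hand => by
      simp only [valuation_imp hneg hand, hand]; tauto) (ProvesFrom.of_mem hφ))
      (ProvesFrom.of_mem hψ)

end MaxConsistent

end Derivations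

theorem exists_maxConsistent_superset {A AP : Type} [Nonempty AP] {P : Form A AP → Prop}
    {Γ : Set (Form A AP)} (h : ConsistentSet P Γ) :
    ∃ Δ, Γ ⊆ Δ ∧ MaxConsistent P Δ := by
  obtain ⟨Δ, hΓΔ, hΔ⟩ := zorn_subset_nonempty {Δ | ConsistentSet P Δ} (fun c hc hchain hne => by
    refine ⟨⋃₀ c, fun ⟨L, hL, hprf⟩ => ?_, fun _ => Set.subset_sUnion_of_mem⟩
    obtain ⟨Δ, hΔc, hLΔ⟩ := hchain.directedOn.exists_mem_subset_of_finite_of_subset_sUnion hne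
      L.finite_toSet hL
    exact hc hΔc ⟨L, hLΔ, hprf⟩) Γ h
  exact ⟨Δ, hΓΔ, hΔ.prop, fun φ hφ hcons => hφ (hΔ.eq_of_subset hcons (Set.subset_insert φ Δ) ▸
    Set.mem_insert φ Δ)⟩

theorem exists_canonicalPsm_rel_not_mem {A AP : Type} [Fintype A] [Nonempty AP]
    {Ax : Form A AP → Prop} {Γ : {Γ : Set (Form A AP) // MaxConsistent (Prf Ax) Γ}}
    {B : Finset A} {hB : B.Nonempty} {ψ : Form A AP} (h : dk B hB ψ ∉ Γ.1) :
    ∃ Δ, (canonicalPsm A AP (Prf Ax)).rel B Γ Δ ∧ ψ ∉ Δ.1 := by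
  have hcons : ConsistentSet (Prf Ax) (insert ψ.neg {χ | dk B hB χ ∈ Γ.1}) := fun hinc =>
    h (Γ.2.mem_of_provesFrom
      (ProvesFrom.dk_of_boxed (ProvesFrom.of_insert_neg_proves_falsum hinc)))
  obtain ⟨Δ, hsub, hΔ⟩ := exists_maxConsistent_superset hcons
  exact ⟨⟨Δ, hΔ⟩, fun _ χ hχ => hsub (Set.mem_insert_of_mem _ hχ),
    (hΔ.neg_mem_iff ψ).mp (hsub (Set.mem_insert _ _))⟩

/-- Truth Lemma for the canonical pseudo-model: for every formula `φ` of
`L_D` and every maximal `SC`-consistent set `Γ`, `φ ∈ Γ` iff `Mc,Γ ⊨ φ`. -/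
theorem truth_lemma (A AP : Type) [Fintype A] [Nonempty AP]
    (Γ : {Γ : Set (Form A AP) // MaxConsistent SC Γ}) (φ : Form A AP) :
    φ ∈ Γ.1 ↔ (canonicalPsm A AP SC).sat Γ φ := by
  induction φ generalizing Γ with
  | atom p => rfl
  | neg ψ ih => exact (Γ.2.neg_mem_iff ψ).trans (not_congr (ih Γ))
  | and ψ χ ihψ ihχ => exact (Γ.2.and_mem_iff ψ χ).trans (and_congr (ihψ Γ) (ihχ Γ))
  | dk B hB ψ ih =>
    refine ⟨fun h Δ hΓΔ => (ih Δ).mp (hΓΔ hB ψ h), fun h => by_contra fun hψ => ?_⟩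
    obtain ⟨Δ, hΓΔ, hψΔ⟩ := exists_canonicalPsm_rel_not_mem hψ
    exact hψΔ ((ih Δ).mpr (h Δ hΓΔ))
end

section
/- Unravelling preserves truth: let M be a pseudo-model and U(M) its unravelling. For every history h of M and every formula φ of L_D, M,last(h) ⊨ φ if and only if U(M),h ⊨ φ. -/
attribute [local instance] Classical.propDecidable

/-! The relations `∼^U_a` of the unravelling live on the tree of histories: `h ∼^U_a h'` forces
every edge on the tree path between `h` and `h'` to carry a group containing `a`, and forces `a`
to be alive at the fork where the path turns. Intersecting over `a ∈ B`, the path carries only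
groups `B_i ⊇ B`, so by antitonicity and transitivity `last h ∼_B last h'`; the union axiom of
pseudo-models keeps the fork `B`-alive. Conversely a `∼_B`-successor `w` of `last h` is the last
world of the one-step extension `(h, B, w)`, which is `→_a`-related to `h` for every `a ∈ B`. -/

section Paths

variable {A AP W : Type} {M : PseudoData A AP W}

def pathLast (w : W) (l : List (Finset A × W)) : W := (l.map Prod.snd).getLastD w

@[simp] lemma pathLast_nil (w : W) : pathLast w ([] : List (Finset A × W)) = w := rfl

@[simp] lemma pathLast_cons (w : W) (e : Finset A × W) (l : List (Finset A × W)) :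
    pathLast w (e :: l) = pathLast e.2 l := by
  simp only [pathLast, List.map_cons, List.getLastD_cons]

lemma pathLast_append (w : W) (l₁ l₂ : List (Finset A × W)) :
    pathLast w (l₁ ++ l₂) = pathLast (pathLast w l₁) l₂ := by
  induction l₁ generalizing w with
  | nil => rfl
  | cons e l ih => simp [ih]

lemma Hist.last_eq_pathLast (h : Hist M) : h.last = pathLast h.first h.steps := rfl

lemma isHist_append {w : W} {l₁ l₂ : List (Finset A × W)} :
    IsHist M w (l₁ ++ l₂) ↔ IsHist M w l₁ ∧ IsHist M (pathLast w l₁) l₂ := by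
  induction l₁ generalizing w with
  | nil => simp [IsHist]
  | cons e l ih => simp [IsHist, ih, and_assoc]

def Hist.snoc (h : Hist M) (B : Finset A) (w : W) (hw : M.rel B h.last w) : Hist M where
  first := h.first
  steps := h.steps ++ [(B, w)]
  valid := isHist_append.2 ⟨h.valid, hw, trivial⟩

@[simp] lemma Hist.last_snoc (h : Hist M) {B : Finset A} {w : W} (hw : M.rel B h.last w) :
    (h.snoc B w hw).last = w := by
  simp [Hist.last_eq_pathLast, Hist.snoc, pathLast_append]

lemma Hist.histStep_snoc (h : Hist M) {B : Finset A} {w : W} (hw : M.rel B h.last w)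
    {a : A} (ha : a ∈ B) : histStep M a h (h.snoc B w hw) :=
  ⟨B, w, ha, rfl, rfl⟩

end Paths

namespace PseudoData.IsPseudo

variable {A AP W : Type} [DecidableEq A] {M : PseudoData A AP W} (hM : M.IsPseudo)
include hM

lemma symm {B : Finset A} {w w' : W} (hr : M.rel B w w') : M.rel B w' w := hM.1 B hr

lemma trans {B : Finset A} {w w' w'' : W} (h₁ : M.rel B w w') (h₂ : M.rel B w' w'') :
    M.rel B w w'' :=
  hM.2.1 B h₁ h₂

lemma mono {B B' : Finset A} (hBB' : B ⊆ B') {w w' : W} (hr : M.rel B' w w') :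
    M.rel B w w' :=
  hM.2.2.1 B B' hBB' w w' hr

lemma rel_self_union {B B' : Finset A} {w : W} (hB : M.rel B w w) (hB' : M.rel B' w w) :
    M.rel (B ∪ B') w w :=
  hM.2.2.2 w B B' hB hB'

lemma rel_self_of_rel {B : Finset A} {w w' : W} (hr : M.rel B w w') : M.rel B w w :=
  hM.trans hr (hM.symm hr)

lemma rel_pathLast {B : Finset A} {w : W} {l : List (Finset A × W)} (hl : IsHist M w l)
    (hBl : ∀ e ∈ l, B ⊆ e.1) (hw : M.rel B w w) : M.rel B w (pathLast w l) := by
  induction l generalizing w with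
  | nil => exact hw
  | cons e l ih =>
    have hwe : M.rel B w e.2 := hM.mono (hBl e List.mem_cons_self) hl.1
    rw [pathLast_cons]
    exact hM.trans hwe <| ih hl.2 (fun e' he' => hBl e' (List.mem_cons_of_mem _ he'))
      (hM.rel_self_of_rel (hM.symm hwe))

lemma rel_self_pathLast_append {B : Finset A} {w : W} {l₁ l₂ : List (Finset A × W)}
    (hl : IsHist M w (l₁ ++ l₂)) (hBl₂ : ∀ e ∈ l₂, B ⊆ e.1)
    (hw : M.rel B (pathLast w l₁) (pathLast w l₁)) :
    M.rel B (pathLast w (l₁ ++ l₂)) (pathLast w (l₁ ++ l₂)) := by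
  rw [pathLast_append]
  exact hM.rel_self_of_rel (hM.symm (hM.rel_pathLast (isHist_append.1 hl).2 hBl₂ hw))

end PseudoData.IsPseudo

section GroupPath

variable {A AP W : Type} {M : PseudoData A AP W}

/-- The fork `p` is a common prefix of `h` and `h'`, not necessarily the longest one. -/
def Hist.GroupPath (B : Finset A) (h h' : Hist M) : Prop :=
  h'.first = h.first ∧ ∃ p s t : List (Finset A × W),
    h.steps = p ++ s ∧ h'.steps = p ++ t ∧ (∀ e ∈ s, B ⊆ e.1) ∧
    (∀ e ∈ t, B ⊆ e.1) ∧ M.rel B (pathLast h.first p) (pathLast h.first p)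

namespace Hist.GroupPath

lemma symm {B : Finset A} {h h' : Hist M} (hp : h.GroupPath B h') : h'.GroupPath B h := by
  obtain ⟨hf, p, s, t, hs, ht, hBs, hBt, hfork⟩ := hp
  exact ⟨hf.symm, p, t, s, ht, hs, hBt, hBs, hf ▸ hfork⟩

lemma trans {B : Finset A} {h h' h'' : Hist M}
    (h₁ : h.GroupPath B h') (h₂ : h'.GroupPath B h'') : h.GroupPath B h'' := by
  obtain ⟨hf₁, p, s, t, hs, ht, hBs, hBt, hfork₁⟩ := h₁
  obtain ⟨hf₂, q, u, v, hu, hv, hBu, hBv, hfork₂⟩ := h₂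
  rcases List.append_eq_append_iff.1 (ht.symm.trans hu) with ⟨r, rfl, rfl⟩ | ⟨r, rfl, rfl⟩
  · rw [List.forall_mem_append] at hBt
    exact ⟨hf₂.trans hf₁, p, s, r ++ v, hs, by rw [hv, List.append_assoc], hBs,
      List.forall_mem_append.2 ⟨hBt.1, hBv⟩, hfork₁⟩
  · rw [List.forall_mem_append] at hBu
    refine ⟨hf₂.trans hf₁, q, r ++ s, v, by rw [hs, List.append_assoc], hv,
      List.forall_mem_append.2 ⟨hBu.1, hBs⟩, hBv, hf₁ ▸ hfork₂⟩

variable [DecidableEq A]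

lemma union (hM : M.IsPseudo) {B B' : Finset A} {h h' : Hist M}
    (h₁ : h.GroupPath B h') (h₂ : h.GroupPath B' h') : h.GroupPath (B ∪ B') h' := by
  obtain ⟨hf, p, s, t, hs, ht, hBs, hBt, hfork⟩ := h₁
  obtain ⟨-, q, u, v, hu, hv, hBu, hBv, hfork'⟩ := h₂
  rcases List.append_eq_append_iff.1 (hs.symm.trans hu) with ⟨r, rfl, rfl⟩ | ⟨r, rfl, rfl⟩
  · obtain rfl : t = r ++ v := List.append_cancel_left (by rw [← ht, hv, List.append_assoc])
    rw [List.forall_mem_append] at hBs hBt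
    have hforkB := hM.rel_self_pathLast_append (isHist_append.1 (hu ▸ h.valid)).1 hBs.1 hfork
    exact ⟨hf, p ++ r, u, v, hu, hv, fun e he => Finset.union_subset (hBs.2 e he) (hBu e he),
      fun e he => Finset.union_subset (hBt.2 e he) (hBv e he), hM.rel_self_union hforkB hfork'⟩
  · obtain rfl : v = r ++ t := List.append_cancel_left (by rw [← hv, ht, List.append_assoc])
    rw [List.forall_mem_append] at hBu hBv
    have hforkB' := hM.rel_self_pathLast_append (isHist_append.1 (hs ▸ h.valid)).1 hBu.1 hfork'
    exact ⟨hf, q ++ r, s, t, hs, ht, fun e he => Finset.union_subset (hBs e he) (hBu.2 e he),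
      fun e he => Finset.union_subset (hBt e he) (hBv.2 e he), hM.rel_self_union hfork hforkB'⟩

lemma rel_last (hM : M.IsPseudo) {B : Finset A} {h h' : Hist M} (hp : h.GroupPath B h') :
    M.rel B h.last h'.last := by
  obtain ⟨hf, p, s, t, hs, ht, hBs, hBt, hfork⟩ := hp
  have hvs := (isHist_append.1 (hs ▸ h.valid)).2
  have hvt := (isHist_append.1 (hf ▸ ht ▸ h'.valid)).2
  have hrs := hM.rel_pathLast hvs hBs hfork
  have hrt := hM.rel_pathLast hvt hBt hfork
  rw [Hist.last_eq_pathLast, Hist.last_eq_pathLast, hs, ht, hf, pathLast_append,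
    pathLast_append]
  exact hM.trans (hM.symm hrs) hrt

end Hist.GroupPath

variable [DecidableEq A]

lemma Hist.groupPath_of_histStep (hM : M.IsPseudo) {a : A} {h h' : Hist M}
    (hst : histStep M a h h') : h.GroupPath {a} h' := by
  obtain ⟨B, w, ha, hf, hsteps⟩ := hst
  have hw : M.rel B h.last w := by
    have hv := h'.valid
    rw [hsteps, hf] at hv
    exact (isHist_append.1 hv).2.1
  refine ⟨hf, h.steps, [], [(B, w)], by simp, hsteps, by simp, by simpa using ha, ?_⟩
  exact hM.rel_self_of_rel (hM.mono (Finset.singleton_subset_iff.2 ha) hw)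

lemma Hist.groupPath_of_histRel (hM : M.IsPseudo) {a : A} {h h' : Hist M}
    (hr : histRel M a h h') : h.GroupPath {a} h' := by
  have hstep {g g' : Hist M} (hst : histStep M a g g' ∨ histStep M a g' g) :
      g.GroupPath {a} g' :=
    hst.elim (groupPath_of_histStep hM) fun hst => (groupPath_of_histStep hM hst).symm
  induction hr with
  | single hst => exact hstep hst
  | tail _ hst ih => exact ih.trans (hstep hst)

lemma Hist.groupPath_of_forall_histRel (hM : M.IsPseudo) {B : Finset A} (hB : B.Nonempty)
    {h h' : Hist M} (hr : ∀ a ∈ B, histRel M a h h') : h.GroupPath B h' := by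
  induction hB using Finset.Nonempty.cons_induction with
  | singleton a => exact groupPath_of_histRel hM (hr a (Finset.mem_singleton_self a))
  | cons a B ha hB ih =>
    rw [Finset.cons_eq_insert, Finset.insert_eq]
    exact (groupPath_of_histRel hM (hr a (by simp))).union hM
      (ih fun b hb => hr b (by simp [hb]))

end GroupPath

/-- Unravelling preserves truth: for every history `h` of a pseudo-model
`M` and every formula `φ` of `L_D`, `M,last(h) ⊨ φ` iff `U(M),h ⊨ φ`. -/
theorem unravel_preserves_truth (A AP W : Type) [DecidableEq A]
    (M : PseudoData A AP W) (hM : M.IsPseudo)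
    (h : Hist M) (φ : Form A AP) :
    M.sat h.last φ ↔ (unravel M).sat h φ := by
  induction φ generalizing h with
  | atom p => exact Iff.rfl
  | neg ψ ih => exact not_congr (ih h)
  | and ψ χ ih₁ ih₂ => exact and_congr (ih₁ h) (ih₂ h)
  | dk B hB ψ ih =>
    constructor
    · intro H h' hr
      exact (ih h').1 (H _ ((Hist.groupPath_of_forall_histRel hM hB hr).rel_last hM))
    · intro H w hw
      have hsnoc : ∀ a ∈ B, histRel M a h (h.snoc B w hw) := fun a ha =>
        .single (.inl (h.histStep_snoc hw ha))
      simpa using (ih (h.snoc B w hw)).2 (H _ hsnoc)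
end

section
/- Quotient by world-equivalence yields a proper model preserving truth: let M be a partial epistemic model such that w ≡ w' implies L(w) = L(w'). Then the quotient model M' (whose worlds are the ≡-equivalence classes) is a proper partial epistemic model, and for every world w of M and formula φ of L_D, M,w ⊨ φ if and only if M',[w] ⊨ φ. -/
attribute [local instance] Classical.propDecidable

/-- Quotient by world-equivalence yields a proper model preserving truth:
if `M` is a partial epistemic model such that `w ≡ w'` implies `L(w) = L(w')`, then the
quotient model is a proper partial epistemic model and satisfies the same formulas. -/
theorem properify_proper_and_truth (A AP W : Type) (M : PEData A AP W) (hM : M.IsPE)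
    (hL : ∀ w w' : W, pequiv M w w' → M.label w = M.label w') :
    (properify M).IsPE ∧ (properify M).Proper ∧
    (∀ (w : W) (φ : Form A AP),
      M.sat w φ ↔ (properify M).sat (Quot.mk (pequiv M) w) φ) := by
  have hsym : ∀ a, Symmetric (M.rel a) := fun a => (hM a).1
  have htr : ∀ a, Transitive (M.rel a) := fun a => (hM a).2
  have heq : Equivalence (pequiv M) := by
    constructor
    · intro w; exact ⟨rfl, fun a ha => ha⟩
    · rintro w w' ⟨h1, h2⟩
      refine ⟨h1.symm, fun a ha => hsym a (h2 a ?_)⟩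
      rw [h1]; exact ha
    · rintro w w' w'' ⟨h1, h2⟩ ⟨h3, h4⟩
      refine ⟨h1.trans h3, fun a ha => htr a (h2 a ha) (h4 a ?_)⟩
      rw [← h1]; exact ha
  have hexact : ∀ w w' : W, Quot.mk (pequiv M) w = Quot.mk (pequiv M) w' →
      pequiv M w w' := by
    intro w w' h
    exact (Equivalence.eqvGen_iff heq).mp (Quot.eqvGen_exact h)
  have hrel : ∀ (a : A) (w w' : W),
      (properify M).rel a (Quot.mk _ w) (Quot.mk _ w') ↔ M.rel a w w' := by
    intro a w w'
    constructor
    · rintro ⟨u, u', h1, h2, h3⟩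
      have e1 : pequiv M w u := hexact _ _ h1
      have e2 : pequiv M u' w' := heq.symm (hexact _ _ h2)
      have hau : M.rel a u u := htr a h3 (hsym a h3)
      have hau' : M.rel a u' u' := htr a (hsym a h3) h3
      have r1 : M.rel a w u := by
        refine e1.2 a ?_
        show a ∈ M.live w
        rw [e1.1]; exact hau
      have r2 : M.rel a u' w' := e2.2 a hau'
      exact htr a (htr a r1 h3) r2
    · intro h; exact ⟨w, w', rfl, rfl, h⟩
  have hlive : ∀ w : W, (properify M).live (Quot.mk _ w) = M.live w := by
    intro w; ext a
    exact hrel a w w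
  have hpe : (properify M).IsPE := by
    intro a
    constructor
    · rintro x y ⟨u, u', h1, h2, h3⟩
      exact ⟨u', u, h2, h1, hsym a h3⟩
    · rintro x y z ⟨u, u', h1, h2, h3⟩ ⟨v, v', h4, h5, h6⟩
      refine ⟨u, v', h1, h5, ?_⟩
      have e : pequiv M u' v := hexact _ _ (h2.symm.trans h4)
      have hau' : M.rel a u' u' := htr a (hsym a h3) h3
      have r1 : M.rel a u' v := e.2 a hau'
      exact htr a (htr a h3 r1) h6
  refine ⟨hpe, ?_, ?_⟩
  · -- Proper
    intro x y hne hlv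
    obtain ⟨w, rfl⟩ := Quot.exists_rep x
    obtain ⟨w', rfl⟩ := Quot.exists_rep y
    by_contra hcon
    push_neg at hcon
    apply hne
    apply Quot.sound
    refine ⟨by rw [← hlive w, ← hlive w', hlv], fun a ha => ?_⟩
    have ha' : a ∈ (properify M).live (Quot.mk _ w) := by rw [hlive]; exact ha
    exact (hrel a w w').mp (hcon a ha')
  · -- truth preservation
    intro w φ
    induction φ generalizing w with
    | atom p =>
      constructor
      · intro h; exact ⟨w, rfl, h⟩
      · rintro ⟨u, hu, h⟩
        show p ∈ M.label w
        rw [hL w u (hexact _ _ hu)]; exact h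
    | neg ψ ih =>
      show ¬ _ ↔ ¬ _
      rw [ih]
    | and ψ χ ih1 ih2 =>
      show _ ∧ _ ↔ _ ∧ _
      rw [ih1, ih2]
    | dk B hB ψ ih =>
      constructor
      · intro h x hx
        obtain ⟨u, rfl⟩ := Quot.exists_rep x
        exact (ih u).mp (h u fun a ha => (hrel a w u).mp (hx a ha))
      · intro h u hu
        exact (ih u).mpr (h (Quot.mk _ u) fun a ha => (hrel a w u).mpr (hu a ha))
end
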